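/- arXiv:2503.13393 — 4 statements merged into one kernel-verified Lean document; each statement's English description precedes it below -/
import Mathlib

section
/- For a graph G with edge set E of size m which is a Theta graph, i.e. consists of three internally disjoint paths of lengths a, b, c between two fixed vertices, the sum over acyclic edge subsets H of (2z)^{|H|}(1+z)^{m-|H|} equals (1+3z)^{a+b+c} - (2z)^{a+b}(1+3z)^{c} - (2z)^{a+c}(1+3z)^{b} - (2z)^{b+c}(1+3z)^{a} + 2(2z)^{a+b+c}. -/
open Polynomial

lemma aux_pow {E : Type*} [DecidableEq E] (p q : Polynomial ℤ) (t : Finset E) :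
    ∑ K ∈ t.powerset, p ^ K.card * q ^ (t.card - K.card) = (p + q) ^ t.card := by
  calc ∑ K ∈ t.powerset, p ^ K.card * q ^ (t.card - K.card)
      = ∑ K ∈ t.powerset, p ^ K.card * q ^ ((t \ K).card) :=
        Finset.sum_congr rfl (fun K hK => by
          rw [Finset.card_sdiff_of_subset (Finset.mem_powerset.mp hK)])
    _ = (p + q) ^ t.card := by
        simpa [Finset.prod_const] using
          (Finset.prod_add (fun _ : E => p) (fun _ : E => q) t).symm

lemma sum_superset {E : Type*} [Fintype E] [DecidableEq E] (S : Finset E) :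
    ∑ H ∈ Finset.univ.filter (fun H => S ⊆ H),
      (2 * X : Polynomial ℤ) ^ H.card * (1 + X) ^ (Fintype.card E - H.card)
    = (2 * X) ^ S.card * (1 + 3 * X) ^ (Sᶜ.card) := by
  have key : ∑ H ∈ Finset.univ.filter (fun H => S ⊆ H),
      (2 * X : Polynomial ℤ) ^ H.card * (1 + X) ^ (Fintype.card E - H.card)
      = ∑ K ∈ Sᶜ.powerset,
        (2 * X : Polynomial ℤ) ^ S.card * ((2 * X) ^ K.card * (1 + X) ^ (Sᶜ.card - K.card)) := by
    refine Finset.sum_nbij' (fun H => H \ S) (fun K => S ∪ K) ?_ ?_ ?_ ?_ ?_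
    · intro H hH
      simp only [Finset.mem_filter, Finset.mem_univ, true_and] at hH
      refine Finset.mem_powerset.mpr (fun x hx => ?_)
      simp only [Finset.mem_sdiff] at hx
      simp [Finset.mem_compl, hx.2]
    · intro K hK; simp
    · intro H hH
      simp only [Finset.mem_filter, Finset.mem_univ, true_and] at hH
      exact Finset.union_sdiff_of_subset hH
    · intro K hK
      have hK' := Finset.mem_powerset.mp hK
      show (S ∪ K) \ S = K
      rw [Finset.union_sdiff_cancel_left
        (Finset.disjoint_left.mpr (fun x hx hx' => by
          have := hK' hx'; simp only [Finset.mem_compl] at this; exact this hx))]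
    · intro H hH
      simp only [Finset.mem_filter, Finset.mem_univ, true_and] at hH
      have h1 : (H \ S).card = H.card - S.card := Finset.card_sdiff_of_subset hH
      have h2 : S.card ≤ H.card := Finset.card_le_card hH
      have h3 : H.card ≤ Fintype.card E := Finset.card_le_univ H
      have h4 : Sᶜ.card = Fintype.card E - S.card := Finset.card_compl S
      rw [← mul_assoc, ← pow_add, h1, h4]
      congr 2
      · omega
      · omega
  rw [key, ← Finset.mul_sum, aux_pow]
  norm_num
  ring_nf

/-- The `h^*`-polynomial of the cosmological polytope of the Theta graph
`Θ_{a,b,c}`: the edge set `E` is partitioned into three paths `A`, `B`, `C` of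
lengths `a`, `b`, `c`; the cycles are exactly the three unions `A ∪ B`, `A ∪ C`
and `B ∪ C`, so an edge subset `H` is acyclic iff it contains none of them. -/
theorem stmt_2 (E : Type*) [Fintype E] [DecidableEq E] (a b c : ℕ)
    (ha : 0 < a) (hb : 0 < b) (hc : 0 < c)
    (A B C : Finset E) (hAB : Disjoint A B) (hAC : Disjoint A C) (hBC : Disjoint B C)
    (hUnion : A ∪ B ∪ C = Finset.univ)
    (hcardA : A.card = a) (hcardB : B.card = b) (hcardC : C.card = c)
    (m : ℕ) (hm : m = a + b + c) :
    ∑ H ∈ Finset.univ.filter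
        (fun H : Finset E => ¬ (A ∪ B ⊆ H) ∧ ¬ (A ∪ C ⊆ H) ∧ ¬ (B ∪ C ⊆ H)),
        (2 * X : Polynomial ℤ) ^ H.card * (1 + X) ^ (m - H.card)
      = (1 + 3 * X) ^ (a + b + c)
        - (2 * X) ^ (a + b) * (1 + 3 * X) ^ c
        - (2 * X) ^ (a + c) * (1 + 3 * X) ^ b
        - (2 * X) ^ (b + c) * (1 + 3 * X) ^ a
        + 2 * (2 * X) ^ (a + b + c) := by
  have hE : Fintype.card E = m := by
    rw [← Finset.card_univ, ← hUnion,
      Finset.card_union_of_disjoint (Finset.disjoint_union_left.mpr ⟨hAC, hBC⟩),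
      Finset.card_union_of_disjoint hAB, hcardA, hcardB, hcardC, hm]
  set f : Finset E → Polynomial ℤ :=
    fun H => (2 * X : Polynomial ℤ) ^ H.card * (1 + X) ^ (m - H.card) with hf
  have hmE : m = Fintype.card E := hE.symm
  -- pointwise inclusion-exclusion identity
  have step : ∀ H ∈ (Finset.univ : Finset (Finset E)),
      (if ¬ (A ∪ B ⊆ H) ∧ ¬ (A ∪ C ⊆ H) ∧ ¬ (B ∪ C ⊆ H) then f H else 0)
      = f H - (if A ∪ B ⊆ H then f H else 0) - (if A ∪ C ⊆ H then f H else 0)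
          - (if B ∪ C ⊆ H then f H else 0) + 2 * (if H = Finset.univ then f H else 0) := by
    intro H _
    have toUniv : A ⊆ H → B ⊆ H → C ⊆ H → H = Finset.univ := fun pa pb pc =>
      Finset.univ_subset_iff.mp
        (hUnion ▸ Finset.union_subset (Finset.union_subset pa pb) pc)
    by_cases hu : H = Finset.univ
    · subst hu
      simp [Finset.subset_univ]
      ring
    · have h12 : ¬ (A ∪ B ⊆ H ∧ A ∪ C ⊆ H) := fun ⟨p, q⟩ =>
        hu (toUniv ((Finset.union_subset_iff.mp p).1) ((Finset.union_subset_iff.mp p).2)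
          ((Finset.union_subset_iff.mp q).2))
      have h13 : ¬ (A ∪ B ⊆ H ∧ B ∪ C ⊆ H) := fun ⟨p, q⟩ =>
        hu (toUniv ((Finset.union_subset_iff.mp p).1) ((Finset.union_subset_iff.mp p).2)
          ((Finset.union_subset_iff.mp q).2))
      have h23 : ¬ (A ∪ C ⊆ H ∧ B ∪ C ⊆ H) := fun ⟨p, q⟩ =>
        hu (toUniv ((Finset.union_subset_iff.mp p).1) ((Finset.union_subset_iff.mp q).1)
          ((Finset.union_subset_iff.mp q).2))
      by_cases h1 : A ∪ B ⊆ H <;> by_cases h2 : A ∪ C ⊆ H <;> by_cases h3 : B ∪ C ⊆ H <;>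
        first
          | exact (h12 ⟨h1, h2⟩).elim
          | exact (h13 ⟨h1, h3⟩).elim
          | exact (h23 ⟨h2, h3⟩).elim
          | (simp [h1, h2, h3, hu]; try ring)
  rw [Finset.sum_filter, Finset.sum_congr rfl step, Finset.sum_add_distrib,
    Finset.sum_sub_distrib, Finset.sum_sub_distrib, Finset.sum_sub_distrib, ← Finset.mul_sum]
  -- evaluate each of the five sums
  have e0 : ∑ H : Finset E, f H = (1 + 3 * X : Polynomial ℤ) ^ (a + b + c) := by
    have h1 : (Finset.univ : Finset (Finset E)).filter (fun H => (∅ : Finset E) ⊆ H)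
        = Finset.univ := by simp
    have := sum_superset (∅ : Finset E)
    rw [h1] at this
    simp only [hf, hmE]
    rw [this]
    simp [Finset.card_compl, hE, hm]
  have eS : ∀ S : Finset E, ∀ s t : ℕ, S.card = s → s + t = m →
      (∑ H : Finset E, if S ⊆ H then f H else 0)
        = (2 * X : Polynomial ℤ) ^ s * (1 + 3 * X) ^ t := by
    intro S s t hs hst
    rw [← Finset.sum_filter]
    simp only [hf, hmE]
    rw [sum_superset S, Finset.card_compl, hs, hE]
    have ht : m - s = t := by omega
    rw [ht]
  have eU : (∑ H : Finset E, if H = Finset.univ then f H else 0)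
      = (2 * X : Polynomial ℤ) ^ (a + b + c) := by
    rw [Finset.sum_ite_eq' Finset.univ Finset.univ f]
    simp [hf, Finset.card_univ, hE, hm]
  rw [e0, eU,
    eS (A ∪ B) (a + b) c (by rw [Finset.card_union_of_disjoint hAB, hcardA, hcardB]) (by omega),
    eS (A ∪ C) (a + c) b (by rw [Finset.card_union_of_disjoint hAC, hcardA, hcardC]) (by omega),
    eS (B ∪ C) (b + c) a (by rw [Finset.card_union_of_disjoint hBC, hcardB, hcardC]) (by omega)]
end

section
/- For every natural number n, the polynomial identity (1+3z)^{2n} - \sum_{j=2}^{n} (-1)^j (j-1) \binom{n}{j} (2z)^{2j}(1+3z)^{2n-2j} = (1+6z+5z^2)^{n} + 4 n z^2 (1+6z+5z^2)^{n-1} holds in \mathbb{Z}[z]. -/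
open Polynomial

lemma S1 {R : Type*} [CommRing R] (a b : R) (m : ℕ) :
    ∑ j ∈ Finset.range (m + 1), (-1 : R) ^ j * (m.choose j : R) * b ^ j * a ^ (m - j)
      = (a - b) ^ m := by
  have : (a - b) ^ m = (-b + a) ^ m := by ring_nf
  rw [this, add_pow]
  refine Finset.sum_congr rfl fun j hj => ?_
  rw [neg_pow]
  ring

lemma S2 {R : Type*} [CommRing R] (a b : R) (n : ℕ) (hn : 1 ≤ n) :
    ∑ j ∈ Finset.range (n + 1), (-1 : R) ^ j * (j : R) * (n.choose j : R) * b ^ j * a ^ (n - j)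
      = -((n : R) * b * (a - b) ^ (n - 1)) := by
  obtain ⟨m, rfl⟩ := Nat.exists_eq_succ_of_ne_zero (by omega : n ≠ 0)
  rw [Finset.sum_range_succ']
  have h : ∀ i : ℕ, (-1 : R) ^ (i + 1) * ((i + 1 : ℕ) : R) * ((m + 1).choose (i + 1) : R)
      * b ^ (i + 1) * a ^ (m + 1 - (i + 1))
      = -(((m + 1 : ℕ) : R) * b) * ((-1 : R) ^ i * (m.choose i : R) * b ^ i * a ^ (m - i)) := by
    intro i
    have hc : (i + 1) * (m + 1).choose (i + 1) = (m + 1) * m.choose i := by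
      rw [mul_comm (i + 1), Nat.add_one_mul_choose_eq m i, mul_comm]
    have hc' := congrArg (fun t : ℕ => (t : R)) hc
    push_cast at hc'
    have he : m + 1 - (i + 1) = m - i := by omega
    rw [he]
    push_cast
    linear_combination ((-1 : R) ^ (i + 1) * b ^ (i + 1) * a ^ (m - i)) * hc'
  rw [Finset.sum_congr rfl fun i _ => h i, ← Finset.mul_sum, S1]
  push_cast
  simp

lemma key {R : Type*} [CommRing R] (a b : R) (n : ℕ) (hn : 1 ≤ n) :
    a ^ n - ∑ j ∈ Finset.Icc 2 n,
        (-1 : R) ^ j * ((j : R) - 1) * (n.choose j : R) * b ^ j * a ^ (n - j)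
      = (a - b) ^ n + (n : R) * b * (a - b) ^ (n - 1) := by
  have hrange : ∑ j ∈ Finset.range (n + 1),
      (-1 : R) ^ j * ((j : R) - 1) * (n.choose j : R) * b ^ j * a ^ (n - j)
      = -((a - b) ^ n + (n : R) * b * (a - b) ^ (n - 1)) := by
    have hterm : ∀ j : ℕ, (-1 : R) ^ j * ((j : R) - 1) * (n.choose j : R) * b ^ j * a ^ (n - j)
        = (-1 : R) ^ j * (j : R) * (n.choose j : R) * b ^ j * a ^ (n - j)
          - (-1 : R) ^ j * (n.choose j : R) * b ^ j * a ^ (n - j) := fun j => by ring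
    rw [Finset.sum_congr rfl fun j _ => hterm j, Finset.sum_sub_distrib, S1 a b n, S2 a b n hn]
    ring
  have hsplit : ∑ j ∈ Finset.range (n + 1),
      (-1 : R) ^ j * ((j : R) - 1) * (n.choose j : R) * b ^ j * a ^ (n - j)
      = -(a ^ n) + ∑ j ∈ Finset.Icc 2 n,
          (-1 : R) ^ j * ((j : R) - 1) * (n.choose j : R) * b ^ j * a ^ (n - j) := by
    have e : Finset.range (n + 1) = insert 0 (insert 1 (Finset.Icc 2 n)) := by
      ext x; simp [Nat.lt_succ_iff]; omega
    rw [e, Finset.sum_insert (by simp), Finset.sum_insert (by simp)]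
    simp
  have h := hsplit.symm.trans hrange
  linear_combination -h

/-- The `h^*`-polynomial of the cosmological polytope of `K_{2,n}`. -/
theorem stmt_3 (n : ℕ) (hn : 1 ≤ n) :
    (1 + 3 * X : Polynomial ℤ) ^ (2 * n)
      - ∑ j ∈ Finset.Icc 2 n,
          (-1 : Polynomial ℤ) ^ j * ((j : Polynomial ℤ) - 1) * (n.choose j : Polynomial ℤ)
            * (2 * X) ^ (2 * j) * (1 + 3 * X) ^ (2 * n - 2 * j)
      = (1 + 6 * X + 5 * X ^ 2) ^ n
        + 4 * (n : Polynomial ℤ) * X ^ 2 * (1 + 6 * X + 5 * X ^ 2) ^ (n - 1) := by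
  have h := key ((1 + 3 * X : Polynomial ℤ) ^ 2) (4 * X ^ 2) n hn
  have hsum : ∑ j ∈ Finset.Icc 2 n,
      (-1 : Polynomial ℤ) ^ j * ((j : Polynomial ℤ) - 1) * (n.choose j : Polynomial ℤ)
        * (2 * X) ^ (2 * j) * (1 + 3 * X) ^ (2 * n - 2 * j)
      = ∑ j ∈ Finset.Icc 2 n,
          (-1 : Polynomial ℤ) ^ j * ((j : Polynomial ℤ) - 1) * (n.choose j : Polynomial ℤ)
            * (4 * X ^ 2) ^ j * ((1 + 3 * X) ^ 2) ^ (n - j) := by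
    refine Finset.sum_congr rfl fun j hj => ?_
    have hb : (2 * X : Polynomial ℤ) ^ 2 = 4 * X ^ 2 := by ring
    have e2 : 2 * n - 2 * j = 2 * (n - j) := by omega
    rw [pow_mul, hb, e2, pow_mul]
  rw [hsum, pow_mul]
  linear_combination h
end

section
/- Let G be a finite multigraph and e an edge that is neither a loop nor a bridge. Then the polynomial h*(G;z) := \sum_{H\subseteq E(G)\text{ acyclic}} (2z)^{|H|}(1+z)^{|E(G)|-|H|} satisfies the deletion-contraction recurrence h*(G;z) = (1+z)\, h*(G\setminus e; z) + 2z\, h*(G/e; z). -/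
open Polynomial

/-- An edge subset `H` of a multigraph (edges `E` with endpoints `ends e : Sym2 V`)
is acyclic iff every nonempty subset of `H` has fewer edges than incident vertices. -/
def IsAcyclicSub {V E : Type*} [Fintype V] [DecidableEq V] [DecidableEq E]
    (ends : E → Sym2 V) (H : Finset E) : Prop :=
  ∀ H' ⊆ H, H'.Nonempty →
    H'.card < (Finset.univ.filter (fun v : V => ∃ f ∈ H', v ∈ ends f)).card

/- The `h^*`-polynomial of the cosmological polytope of a multigraph with `m` edges:
`∑_{H acyclic} (2z)^{|H|}(1+z)^{m-|H|}`. -/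
open Classical in
noncomputable def hstarPoly {V E : Type*} [Fintype V] [Fintype E] [DecidableEq V]
    [DecidableEq E] (ends : E → Sym2 V) (m : ℕ) : Polynomial ℤ :=
  ∑ H ∈ Finset.univ.filter (fun H : Finset E => IsAcyclicSub ends H),
    (2 * X) ^ H.card * (1 + X) ^ (m - H.card)

section Aux

open Classical

variable {V E : Type*} [Fintype V] [DecidableEq V] [DecidableEq E]

/-- Cards of vertex filters agree for any decidability instances. -/
private lemma filter_card_eq (p q : V → Prop) [DecidablePred p] [DecidablePred q]
    (h : ∀ x, p x ↔ q x) :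
    (Finset.univ.filter p).card = (Finset.univ.filter q).card := by
  congr 1
  ext x
  simp [Finset.mem_filter, h x]

private lemma key_aux (ends : E → Sym2 V) (e : E) (u v : V) (he : ends e = s(u, v))
    (huv : u ≠ v) (K : Finset E) (heK : e ∉ K) :
    IsAcyclicSub ends (insert e K) ↔
      IsAcyclicSub (fun f => (ends f).map (fun w => if w = v then u else w)) K := by
  classical
  set π : V → V := fun w => if w = v then u else w with hπdef
  have hπv : π v = u := by simp [hπdef]
  have hπid : ∀ w, w ≠ v → π w = w := by intro w hw; simp [hπdef, hw]
  have hπne : ∀ w, π w ≠ v := by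
    intro w
    by_cases hw : w = v
    · subst hw; rw [hπv]; exact huv
    · rw [hπid w hw]; exact hw
  set S : Finset E → Finset V :=
    fun H => Finset.univ.filter (fun x => ∃ f ∈ H, x ∈ ends f) with hSdef
  -- contracted vertex set is the image under π
  have hS' : ∀ H : Finset E,
      (Finset.univ.filter
        (fun x : V => ∃ f ∈ H, x ∈ Sym2.map π (ends f))).card = ((S H).image π).card := by
    intro H
    have : (Finset.univ.filter (fun x : V => ∃ f ∈ H, x ∈ Sym2.map π (ends f)))
        = (S H).image π := by
      ext x
      simp only [Finset.mem_filter, Finset.mem_univ, true_and, Finset.mem_image, hSdef,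
        Sym2.mem_map]
      constructor
      · rintro ⟨f, hf, y, hy, rfl⟩
        exact ⟨y, ⟨f, hf, hy⟩, rfl⟩
      · rintro ⟨y, ⟨f, hf, hy⟩, rfl⟩
        exact ⟨f, hf, y, hy, rfl⟩
    rw [this]
  have hSe : ∀ H : Finset E, S (insert e H) = insert u (insert v (S H)) := by
    intro H
    ext x
    simp only [hSdef, Finset.mem_filter, Finset.mem_univ, true_and, Finset.mem_insert]
    constructor
    · rintro ⟨f, rfl | hf, hx⟩
      · rw [he] at hx
        rcases Sym2.mem_iff.1 hx with rfl | rfl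
        · exact Or.inl rfl
        · exact Or.inr (Or.inl rfl)
      · exact Or.inr (Or.inr ⟨f, hf, hx⟩)
    · rintro (rfl | rfl | ⟨f, hf, hx⟩)
      · exact ⟨e, Or.inl rfl, by rw [he]; exact Sym2.mem_mk_left _ _⟩
      · exact ⟨e, Or.inl rfl, by rw [he]; exact Sym2.mem_mk_right _ _⟩
      · exact ⟨f, Or.inr hf, hx⟩
  have himg : ∀ T : Finset V, v ∈ T → T.image π = insert u (T.erase v) := by
    intro T hv
    ext x
    simp only [Finset.mem_image, Finset.mem_insert, Finset.mem_erase]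
    constructor
    · rintro ⟨y, hy, rfl⟩
      by_cases hyv : y = v
      · subst hyv; exact Or.inl hπv
      · rw [hπid y hyv]; exact Or.inr ⟨hyv, hy⟩
    · rintro (rfl | ⟨hx, hxT⟩)
      · exact ⟨v, hv, hπv⟩
      · exact ⟨x, hxT, hπid x hx⟩
  have himg' : ∀ T : Finset V, v ∉ T → T.image π = T := by
    intro T hv
    ext x
    simp only [Finset.mem_image]
    constructor
    · rintro ⟨y, hy, rfl⟩
      have : y ≠ v := fun h => hv (h ▸ hy)
      rwa [hπid y this]
    · intro hx
      exact ⟨x, hx, hπid x (fun h => hv (h ▸ hx))⟩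
  constructor
  · intro hA
    intro H' hH' hne
    rw [filter_card_eq _ (fun x : V => ∃ f ∈ H', x ∈ Sym2.map π (ends f)) (fun x => Iff.rfl),
      hS']
    by_cases hv : v ∈ S H'
    · -- use insert e H'
      have heH' : e ∉ H' := fun h => heK (hH' h)
      have h1 := hA (insert e H') (Finset.insert_subset_insert e hH')
        ⟨e, Finset.mem_insert_self _ _⟩
      rw [show (Finset.univ.filter (fun x : V => ∃ f ∈ insert e H', x ∈ ends f))
            = S (insert e H') from rfl, hSe, Finset.card_insert_of_notMem heH'] at h1
      have hvS : insert v (S H') = S H' := Finset.insert_eq_self.2 hv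
      rw [hvS] at h1
      rw [himg _ hv]
      have hce : ((S H').erase v).card = (S H').card - 1 := Finset.card_erase_of_mem hv
      have hSpos : 1 ≤ (S H').card := Finset.card_pos.2 ⟨v, hv⟩
      by_cases hu : u ∈ S H'
      · have h2 : insert u (S H') = S H' := Finset.insert_eq_self.2 hu
        rw [h2] at h1
        have h3 : (S H').erase v ⊆ insert u ((S H').erase v) := Finset.subset_insert _ _
        have h4 := Finset.card_le_card h3
        omega
      · have h2 : (insert u (S H')).card = (S H').card + 1 :=
          Finset.card_insert_of_notMem hu
        rw [h2] at h1
        have hu' : u ∉ (S H').erase v := fun h => hu (Finset.mem_of_mem_erase h)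
        have h3 : (insert u ((S H').erase v)).card = (S H').card - 1 + 1 := by
          rw [Finset.card_insert_of_notMem hu', hce]
        omega
    · rw [himg' _ hv]
      have h1 := hA H' (hH'.trans (Finset.subset_insert e K)) hne
      exact h1
  · intro hB
    intro H'' hH'' hne
    by_cases heH : e ∈ H''
    · set H' := H''.erase e with hH'def
      have hins : insert e H' = H'' := Finset.insert_erase heH
      have hcard : H''.card = H'.card + 1 := by
        rw [hH'def, Finset.card_erase_of_mem heH]
        have : 1 ≤ H''.card := Finset.card_pos.2 ⟨e, heH⟩
        omega
      have hgoal : (Finset.univ.filter (fun x : V => ∃ f ∈ H'', x ∈ ends f)) = S H'' := rfl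
      rw [hgoal, ← hins, hSe]
      set T := insert u (insert v (S H')) with hTdef
      have hvT : v ∈ T := Finset.mem_insert_of_mem (Finset.mem_insert_self _ _)
      have huT : u ∈ T := Finset.mem_insert_self _ _
      have hT2 : 2 ≤ T.card := Finset.one_lt_card.2 ⟨u, huT, v, hvT, huv⟩
      rcases Finset.eq_empty_or_nonempty H' with hE | hne'
      · rw [hE, Finset.card_insert_of_notMem (Finset.notMem_empty e), Finset.card_empty]
        omega
      · have hH'K : H' ⊆ K := by
          intro f hf
          have hfH : f ∈ H'' := Finset.mem_of_mem_erase hf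
          rcases Finset.mem_insert.1 (hH'' hfH) with rfl | h
          · exact absurd hf (Finset.notMem_erase f H'')
          · exact h
        have h1 := hB H' hH'K hne'
        rw [filter_card_eq _ (fun x : V => ∃ f ∈ H', x ∈ Sym2.map π (ends f)) (fun x => Iff.rfl),
          hS'] at h1
        -- image π (S H') ⊆ T.erase v
        have hsub : (S H').image π ⊆ T.erase v := by
          intro x hx
          rcases Finset.mem_image.1 hx with ⟨y, hy, rfl⟩
          refine Finset.mem_erase.2 ⟨hπne y, ?_⟩
          by_cases hyv : y = v
          · subst hyv; rw [hπv]; exact huT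
          · rw [hπid y hyv]
            exact Finset.mem_insert_of_mem (Finset.mem_insert_of_mem hy)
        have h2 := Finset.card_le_card hsub
        have h3 : (T.erase v).card = T.card - 1 := Finset.card_erase_of_mem hvT
        have h4 : (insert e H').card = H'.card + 1 :=
          Finset.card_insert_of_notMem (by rw [hH'def]; exact Finset.notMem_erase e H'')
        omega
    · have hsubK : H'' ⊆ K := by
        intro f hf
        rcases Finset.mem_insert.1 (hH'' hf) with rfl | h
        · exact absurd hf heH
        · exact h
      have h1 := hB H'' hsubK hne
      rw [filter_card_eq _ (fun x : V => ∃ f ∈ H'', x ∈ Sym2.map π (ends f)) (fun x => Iff.rfl),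
        hS'] at h1
      calc H''.card < ((S H'').image π).card := h1
        _ ≤ (S H'').card := Finset.card_image_le

end Aux

/- Deletion–contraction: if `e` (with distinct endpoints `u ≠ v`) is neither a
loop nor a bridge (i.e. `e` lies in some cycle: there is an acyclic `H` with
`e ∉ H` such that `H ∪ {e}` is not acyclic), then
`h^*(G;z) = (1+z)·h^*(G∖e;z) + 2z·h^*(G/e;z)`.  Subsets of edges of `G∖e` and
`G/e` are identified with subsets of `E` avoiding `e`; contraction replaces the
endpoint `v` by `u` in all edge endpoints. -/
open Classical in
theorem stmt_10 (V E : Type*) [Fintype V] [Fintype E] [DecidableEq V] [DecidableEq E]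
    (ends : E → Sym2 V) (m : ℕ) (hm : Fintype.card E = m)
    (e : E) (u v : V) (he : ends e = s(u, v)) (hnotloop : u ≠ v)
    (hnotbridge : ∃ H : Finset E, e ∉ H ∧ IsAcyclicSub ends H ∧
      ¬ IsAcyclicSub ends (insert e H)) :
    hstarPoly ends m
      = (1 + X) *
          (∑ H ∈ Finset.univ.filter
              (fun H : Finset E => e ∉ H ∧ IsAcyclicSub ends H),
            (2 * X) ^ H.card * (1 + X) ^ (m - 1 - H.card))
        + 2 * X *
          (∑ H ∈ Finset.univ.filter
              (fun H : Finset E => e ∉ H ∧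
                IsAcyclicSub (fun f => (ends f).map (fun w => if w = v then u else w)) H),
            (2 * X) ^ H.card * (1 + X) ^ (m - 1 - H.card)) := by
  classical
  -- cardinality bound: any H avoiding e has card < m
  have hcard_lt : ∀ H : Finset E, e ∉ H → H.card < m := by
    intro H heH
    rw [← hm]
    exact Finset.card_lt_card ⟨Finset.subset_univ H, fun h => heH (h (Finset.mem_univ e))⟩
  unfold hstarPoly
  rw [← Finset.sum_filter_add_sum_filter_not
    (Finset.univ.filter (fun H : Finset E => IsAcyclicSub ends H)) (fun H => e ∈ H)]
  rw [add_comm]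
  congr 1
  · -- deletion part
    rw [Finset.filter_filter, Finset.mul_sum]
    rw [show (Finset.univ.filter (fun H : Finset E => IsAcyclicSub ends H ∧ e ∉ H))
        = Finset.univ.filter (fun H : Finset E => e ∉ H ∧ IsAcyclicSub ends H) from by
      apply Finset.filter_congr; intro H _; simp [and_comm]]
    apply Finset.sum_congr rfl
    intro H hH
    have heH : e ∉ H := ((Finset.mem_filter.1 hH).2).1
    have hlt := hcard_lt H heH
    have hexp : m - H.card = (m - 1 - H.card) + 1 := by omega
    rw [hexp, pow_succ]
    ring
  · -- contraction part
    rw [Finset.filter_filter, Finset.mul_sum]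
    refine Finset.sum_bij' (fun H _ => H.erase e) (fun K _ => insert e K) ?_ ?_ ?_ ?_ ?_
    · intro H hH
      rw [Finset.mem_filter] at hH ⊢
      refine ⟨Finset.mem_univ _, Finset.notMem_erase e H, ?_⟩
      have hins : insert e (H.erase e) = H := Finset.insert_erase hH.2.2
      exact (key_aux ends e u v he hnotloop (H.erase e) (Finset.notMem_erase e H)).1
        (by rw [hins]; exact hH.2.1)
    · intro K hK
      rw [Finset.mem_filter] at hK ⊢
      refine ⟨Finset.mem_univ _, ?_, Finset.mem_insert_self e K⟩
      exact (key_aux ends e u v he hnotloop K hK.2.1).2 hK.2.2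
    · intro H hH
      rw [Finset.mem_filter] at hH
      exact Finset.insert_erase hH.2.2
    · intro K hK
      rw [Finset.mem_filter] at hK
      exact Finset.erase_insert hK.2.1
    · intro H hH
      rw [Finset.mem_filter] at hH
      have heH : e ∈ H := hH.2.2
      have hcard : H.card = (H.erase e).card + 1 := by
        rw [Finset.card_erase_of_mem heH]
        have : 1 ≤ H.card := Finset.card_pos.2 ⟨e, heH⟩
        omega
      rw [hcard, show m - ((H.erase e).card + 1) = m - 1 - (H.erase e).card from by omega,
        pow_succ]
      ring
end

section
/- For positive integers a_1,\dots,a_n with m = \sum a_i, the sum over acyclic edge subsets of the multicycle C (a cycle on n vertices where the i-th edge is replaced by a_i parallel edges) of (2z)^{|H|}(1+z)^{m-|H|} equals \prod_{i=1}^{n}\bigl(2 a_i z (1+z)^{a_i-1} + (1+z)^{a_i}\bigr) - \prod_{i=1}^{n} 2 a_i z (1+z)^{a_i-1}. -/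
open Polynomial

section Aux

variable {E : Type*} [Fintype E] [DecidableEq E]

lemma partition_sum_prod {R : Type*} [CommRing R] {n : ℕ} (P : Fin n → Finset E)
    (hdisj : ∀ i j, i ≠ j → Disjoint (P i) (P j))
    (hcover : (Finset.univ : Finset E) = Finset.univ.biUnion P)
    (f : Fin n → Finset E → R) :
    ∑ H : Finset E, ∏ i, f i (H ∩ P i) = ∏ i, ∑ s ∈ (P i).powerset, f i s := by
  rw [Finset.prod_univ_sum]
  refine Finset.sum_nbij' (fun H i => H ∩ P i)
    (fun p => Finset.univ.biUnion fun i => p i) ?_ ?_ ?_ ?_ ?_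
  · intro H _
    simp only [Fintype.mem_piFinset, Finset.mem_powerset]
    exact fun i => Finset.inter_subset_right
  · intro p _; exact Finset.mem_univ _
  · intro H _
    ext x
    simp only [Finset.mem_biUnion, Finset.mem_univ, true_and, Finset.mem_inter]
    constructor
    · rintro ⟨i, hx, _⟩; exact hx
    · intro hx
      have : x ∈ Finset.univ.biUnion P := by rw [← hcover]; exact Finset.mem_univ x
      obtain ⟨i, _, hi⟩ := Finset.mem_biUnion.1 this
      exact ⟨i, hx, hi⟩
  · intro p hp
    simp only [Fintype.mem_piFinset, Finset.mem_powerset] at hp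
    funext i
    ext x
    simp only [Finset.mem_inter, Finset.mem_biUnion, Finset.mem_univ, true_and]
    constructor
    · rintro ⟨⟨j, hj⟩, hxi⟩
      rcases eq_or_ne j i with rfl | hne
      · exact hj
      · exact absurd (Finset.disjoint_left.1 (hdisj j i hne) (hp j hj) hxi) (fun h => h)
    · intro hx; exact ⟨⟨i, hx⟩, hp i hx⟩
  · intro H _; rfl

lemma card_sum_inter {n : ℕ} (P : Fin n → Finset E)
    (hdisj : ∀ i j, i ≠ j → Disjoint (P i) (P j))
    (hcover : (Finset.univ : Finset E) = Finset.univ.biUnion P)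
    (H : Finset E) : ∑ i, (H ∩ P i).card = H.card := by
  have hH : H = Finset.univ.biUnion fun i => H ∩ P i := by
    ext x
    simp only [Finset.mem_biUnion, Finset.mem_univ, true_and, Finset.mem_inter]
    constructor
    · intro hx
      have : x ∈ Finset.univ.biUnion P := by rw [← hcover]; exact Finset.mem_univ x
      obtain ⟨i, _, hi⟩ := Finset.mem_biUnion.1 this
      exact ⟨i, hx, hi⟩
    · rintro ⟨i, hx, _⟩; exact hx
  conv_rhs => rw [hH]
  rw [Finset.card_biUnion]
  intro i _ j _ hij
  exact (hdisj i j hij).mono Finset.inter_subset_right Finset.inter_subset_right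

lemma class_sum_le (a : ℕ) (ha : 0 < a) (S : Finset E) (hS : S.card = a) :
    ∑ s ∈ S.powerset,
        (if s.card ≤ 1 then (2 * X : Polynomial ℤ) ^ s.card * (1 + X) ^ (a - s.card) else 0)
      = 2 * (a : Polynomial ℤ) * X * (1 + X) ^ (a - 1) + (1 + X) ^ a := by
  rw [Finset.sum_powerset]
  have hinner : ∀ j, ∑ s ∈ S.powersetCard j,
      (if s.card ≤ 1 then (2 * X : Polynomial ℤ) ^ s.card * (1 + X) ^ (a - s.card) else 0)
      = (a.choose j : Polynomial ℤ) *
        (if j ≤ 1 then (2 * X : Polynomial ℤ) ^ j * (1 + X) ^ (a - j) else 0) := by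
    intro j
    rw [Finset.sum_congr rfl (fun s hs => by
      rw [(Finset.mem_powersetCard.1 hs).2]), Finset.sum_const,
      Finset.card_powersetCard, hS, nsmul_eq_mul]
  simp only [hinner]
  rw [hS]
  rw [← Finset.sum_subset (Finset.range_subset_range.2 (by omega) : Finset.range 2 ⊆ Finset.range (a+1))]
  · rw [Finset.sum_range_succ, Finset.sum_range_one]
    norm_num [Nat.choose_one_right]
    ring
  · intro j _ hj
    have : ¬ j ≤ 1 := by simp only [Finset.mem_range] at hj; omega
    simp [this]

lemma class_sum_eq (a : ℕ) (ha : 0 < a) (S : Finset E) (hS : S.card = a) :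
    ∑ s ∈ S.powerset,
        (if s.card = 1 then (2 * X : Polynomial ℤ) ^ s.card * (1 + X) ^ (a - s.card) else 0)
      = 2 * (a : Polynomial ℤ) * X * (1 + X) ^ (a - 1) := by
  rw [Finset.sum_powerset]
  have hinner : ∀ j, ∑ s ∈ S.powersetCard j,
      (if s.card = 1 then (2 * X : Polynomial ℤ) ^ s.card * (1 + X) ^ (a - s.card) else 0)
      = (a.choose j : Polynomial ℤ) *
        (if j = 1 then (2 * X : Polynomial ℤ) ^ j * (1 + X) ^ (a - j) else 0) := by
    intro j
    rw [Finset.sum_congr rfl (fun s hs => by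
      rw [(Finset.mem_powersetCard.1 hs).2]), Finset.sum_const,
      Finset.card_powersetCard, hS, nsmul_eq_mul]
  simp only [hinner]
  rw [hS]
  rw [Finset.sum_eq_single_of_mem 1 (by simp only [Finset.mem_range]; omega)]
  · norm_num [Nat.choose_one_right]; ring
  · intro j _ hj; simp [hj]

end Aux

/-- The `h^*`-polynomial of the cosmological polytope of a multicycle: the edge
set is partitioned into `n` parallel classes `P 1, …, P n` of sizes `a 1, …, a n`;
a subset `H` is acyclic iff it contains at most one edge from each class and
does not select one edge from every class simultaneously. -/
theorem stmt_15 (E : Type*) [Fintype E] [DecidableEq E] (n : ℕ) (hn : 1 ≤ n)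
    (a : Fin n → ℕ) (ha : ∀ i, 0 < a i) (P : Fin n → Finset E)
    (hdisj : ∀ i j, i ≠ j → Disjoint (P i) (P j))
    (hcover : (Finset.univ : Finset E) = Finset.univ.biUnion P)
    (hcard : ∀ i, (P i).card = a i)
    (m : ℕ) (hm : m = ∑ i, a i) :
    ∑ H ∈ Finset.univ.filter
        (fun H : Finset E =>
          (∀ i, (H ∩ P i).card ≤ 1) ∧ ¬ (∀ i, (H ∩ P i).card = 1)),
        (2 * X : Polynomial ℤ) ^ H.card * (1 + X) ^ (m - H.card)
      = ∏ i : Fin n,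
          (2 * (a i : Polynomial ℤ) * X * (1 + X) ^ (a i - 1) + (1 + X) ^ (a i))
        - ∏ i : Fin n, 2 * (a i : Polynomial ℤ) * X * (1 + X) ^ (a i - 1) := by
  classical
  set w : Finset E → Polynomial ℤ :=
    fun H => (2 * X : Polynomial ℤ) ^ H.card * (1 + X) ^ (m - H.card) with hw
  -- key: for H with cards controlled, w H factorizes
  have hfact : ∀ H : Finset E, (∀ i, (H ∩ P i).card ≤ a i) →
      w H = ∏ i, (2 * X : Polynomial ℤ) ^ (H ∩ P i).card * (1 + X) ^ (a i - (H ∩ P i).card) := by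
    intro H hle
    have hc : ∑ i, (H ∩ P i).card = H.card := card_sum_inter P hdisj hcover H
    have hsub : ∑ i, (a i - (H ∩ P i).card) = m - H.card := by
      have : ∑ i, (a i - (H ∩ P i).card) + ∑ i, (H ∩ P i).card = m := by
        rw [← Finset.sum_add_distrib, hm]
        exact Finset.sum_congr rfl fun i _ => Nat.sub_add_cancel (hle i)
      omega
    rw [Finset.prod_mul_distrib, Finset.prod_pow_eq_pow_sum, Finset.prod_pow_eq_pow_sum,
      hc, hsub]
  have hbound : ∀ (H : Finset E) (i : Fin n), (H ∩ P i).card ≤ a i := by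
    intro H i
    rw [← hcard i]
    exact Finset.card_le_card Finset.inter_subset_right
  rw [Finset.sum_filter]
  have hsplit : ∀ H : Finset E,
      (if ((∀ i, (H ∩ P i).card ≤ 1) ∧ ¬ (∀ i, (H ∩ P i).card = 1)) then w H else 0)
      = (if (∀ i, (H ∩ P i).card ≤ 1) then w H else 0)
        - (if (∀ i, (H ∩ P i).card = 1) then w H else 0) := by
    intro H
    by_cases hB : ∀ i, (H ∩ P i).card = 1
    · have hA : ∀ i, (H ∩ P i).card ≤ 1 := fun i => le_of_eq (hB i)
      simp [hA, hB]
    · by_cases hA : ∀ i, (H ∩ P i).card ≤ 1 <;> simp [hA, hB]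
  calc ∑ H : Finset E, (if ((∀ i, (H ∩ P i).card ≤ 1) ∧ ¬ (∀ i, (H ∩ P i).card = 1))
          then w H else 0)
      = (∑ H : Finset E, if (∀ i, (H ∩ P i).card ≤ 1) then w H else 0)
        - ∑ H : Finset E, if (∀ i, (H ∩ P i).card = 1) then w H else 0 := by
        rw [← Finset.sum_sub_distrib]
        exact Finset.sum_congr rfl fun H _ => hsplit H
    _ = ∏ i : Fin n,
          (2 * (a i : Polynomial ℤ) * X * (1 + X) ^ (a i - 1) + (1 + X) ^ (a i))
        - ∏ i : Fin n, 2 * (a i : Polynomial ℤ) * X * (1 + X) ^ (a i - 1) := by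
        congr 1
        · have step : ∀ H : Finset E,
              (if (∀ i, (H ∩ P i).card ≤ 1) then w H else 0)
              = ∏ i, (if (H ∩ P i).card ≤ 1
                  then (2 * X : Polynomial ℤ) ^ (H ∩ P i).card
                    * (1 + X) ^ (a i - (H ∩ P i).card) else 0) := by
            intro H
            by_cases hA : ∀ i, (H ∩ P i).card ≤ 1
            · rw [if_pos hA, hfact H (fun i => (hA i).trans (ha i))]
              exact Finset.prod_congr rfl fun i _ => (if_pos (hA i)).symm
            · push_neg at hA
              obtain ⟨i, hi⟩ := hA
              rw [if_neg (by push_neg; exact ⟨i, hi⟩)]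
              exact (Finset.prod_eq_zero (Finset.mem_univ i) (by rw [if_neg (by omega)])).symm
          rw [Finset.sum_congr rfl fun H _ => step H]
          refine (partition_sum_prod P hdisj hcover
            (fun i s => if s.card ≤ 1
              then (2 * X : Polynomial ℤ) ^ s.card * (1 + X) ^ (a i - s.card)
              else 0)).trans ?_
          exact Finset.prod_congr rfl fun i _ => class_sum_le (a i) (ha i) (P i) (hcard i)
        · have step : ∀ H : Finset E,
              (if (∀ i, (H ∩ P i).card = 1) then w H else 0)
              = ∏ i, (if (H ∩ P i).card = 1
                  then (2 * X : Polynomial ℤ) ^ (H ∩ P i).card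
                    * (1 + X) ^ (a i - (H ∩ P i).card) else 0) := by
            intro H
            by_cases hB : ∀ i, (H ∩ P i).card = 1
            · rw [if_pos hB, hfact H (fun i => (hB i).le.trans (ha i))]
              exact Finset.prod_congr rfl fun i _ => (if_pos (hB i)).symm
            · push_neg at hB
              obtain ⟨i, hi⟩ := hB
              rw [if_neg (by push_neg; exact ⟨i, hi⟩)]
              exact (Finset.prod_eq_zero (Finset.mem_univ i) (by rw [if_neg hi])).symm
          rw [Finset.sum_congr rfl fun H _ => step H]
          refine (partition_sum_prod P hdisj hcover
            (fun i s => if s.card = 1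
              then (2 * X : Polynomial ℤ) ^ s.card * (1 + X) ^ (a i - s.card)
              else 0)).trans ?_
          exact Finset.prod_congr rfl fun i _ => class_sum_eq (a i) (ha i) (P i) (hcard i)
end
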